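/- Define F(q) = (cos x₃, sin x₃ + w₁, 0, w₂, −w₁) and G(q) = (0, 0, 1, 0, 0) on ℝ⁵, where q = (x₁, x₂, x₃, w₁, w₂), and γ : ℝ⁵ → ℝ² by γ₁(q) = x₁² + x₂² − 1, γ₂(q) = x₁ cos x₃ + x₂ sin x₃ + x₂ w₁. Set ϕ(q) = x₁ sin x₃ − x₂ cos x₃, and for q with ϕ(q) ≠ 0 define the feedback ū(q) = (Dγ₂)_q(F(q)) / ϕ(q). Then for every q with γ(q) = 0 and w₁² + w₂² < 1 (so that ϕ(q) ≠ 0), one has (Dγ₁)_q(F(q) + ū(q) G(q)) = 0 and (Dγ₂)_q(F(q) + ū(q) G(q)) = 0; that is, the closed-loop vector field F + ūG is tangent to Γ* = γ⁻¹(0) at every such point, so Γ* is a controlled invariant set for the system q̇ = F(q) + G(q)u on the region ‖w‖ < 1. -/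

import Mathlib

/-- `F(q) = (cos x₃, sin x₃ + w₁, 0, w₂, −w₁)` with `q = (x₁, x₂, x₃, w₁, w₂)`. -/
noncomputable def exFu : (Fin 5 → ℝ) → (Fin 5 → ℝ) :=
  fun q => ![Real.cos (q 2), Real.sin (q 2) + q 3, 0, q 4, -(q 3)]

/-- `G(q) = (0, 0, 1, 0, 0)`. -/
noncomputable def exGu : (Fin 5 → ℝ) → (Fin 5 → ℝ) := fun _ => ![0, 0, 1, 0, 0]

/-- `γ₁(q) = x₁² + x₂² − 1`. -/
noncomputable def gam1 : (Fin 5 → ℝ) → ℝ := fun q => q 0 ^ 2 + q 1 ^ 2 - 1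

/-- `γ₂(q) = x₁ cos x₃ + x₂ sin x₃ + x₂ w₁`. -/
noncomputable def gam2 : (Fin 5 → ℝ) → ℝ :=
  fun q => q 0 * Real.cos (q 2) + q 1 * Real.sin (q 2) + q 1 * q 3

/-- `ϕ(q) = x₁ sin x₃ − x₂ cos x₃`. -/
noncomputable def varphiU (q : Fin 5 → ℝ) : ℝ :=
  q 0 * Real.sin (q 2) - q 1 * Real.cos (q 2)

/-- The feedback `ū(q) = (Dγ₂)_q (F q) / ϕ(q)`. -/
noncomputable def ubar (q : Fin 5 → ℝ) : ℝ :=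
  fderiv ℝ gam2 q (exFu q) / varphiU q


noncomputable def projR (i : Fin 5) : (Fin 5 → ℝ) →L[ℝ] ℝ :=
  ContinuousLinearMap.proj i

lemma coord_hasFDerivAt (q : Fin 5 → ℝ) (i : Fin 5) :
    HasFDerivAt (fun q : Fin 5 → ℝ => q i) (projR i) q :=
  (projR i).hasFDerivAt

lemma gam1_fderiv_apply (q v : Fin 5 → ℝ) :
    fderiv ℝ gam1 q v = 2 * q 0 * v 0 + 2 * q 1 * v 1 := by
  have h0 := coord_hasFDerivAt q 0
  have h1 := coord_hasFDerivAt q 1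
  have hg : HasFDerivAt gam1 ((q 0 • projR 0 + q 0 • projR 0) + (q 1 • projR 1 + q 1 • projR 1)) q := by
    have heq : gam1 = fun x : Fin 5 → ℝ => x 0 * x 0 + x 1 * x 1 - 1 := by
      funext x; simp [gam1]; ring
    rw [heq]
    exact ((h0.mul h0).add (h1.mul h1)).sub_const 1
  rw [hg.fderiv]
  simp [projR, smul_eq_mul]
  ring

lemma gam2_fderiv_apply (q v : Fin 5 → ℝ) :
    fderiv ℝ gam2 q v =
      v 0 * Real.cos (q 2) - q 0 * Real.sin (q 2) * v 2
      + v 1 * Real.sin (q 2) + q 1 * Real.cos (q 2) * v 2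
      + v 1 * q 3 + q 1 * v 3 := by
  have h0 := coord_hasFDerivAt q 0
  have h1 := coord_hasFDerivAt q 1
  have h2 := coord_hasFDerivAt q 2
  have h3 := coord_hasFDerivAt q 3
  have hg : HasFDerivAt gam2
      (-(q 0 • Real.sin (q 2) • projR 2) + Real.cos (q 2) • projR 0
        + (q 1 • Real.cos (q 2) • projR 2 + Real.sin (q 2) • projR 1)
        + (q 1 • projR 3 + q 3 • projR 1)) q := by
    have := ((h0.mul h2.cos).add (h1.mul h2.sin)).add (h1.mul h3)
    refine this.congr_fderiv ?_
    ext v; simp [projR]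
  rw [hg.fderiv]
  simp [projR, smul_eq_mul]
  ring

/-- At every `q` with `γ(q) = 0` and `w₁² + w₂² < 1` one has
`ϕ(q) ≠ 0`, and the closed-loop vector field `F + ū G` is tangent to
`Γ* = γ⁻¹(0)`: `(Dγ₁)_q (F q + ū(q) G q) = 0` and `(Dγ₂)_q (F q + ū(q) G q) = 0`.
Hence `Γ*` is controlled invariant for `q̇ = F(q) + G(q)u` on the region `‖w‖ < 1`. -/
theorem stmt_19 (q : Fin 5 → ℝ) (h1 : gam1 q = 0) (h2 : gam2 q = 0)
    (hw : (q 3) ^ 2 + (q 4) ^ 2 < 1) :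
    varphiU q ≠ 0 ∧
    fderiv ℝ gam1 q (exFu q + ubar q • exGu q) = 0 ∧
    fderiv ℝ gam2 q (exFu q + ubar q • exGu q) = 0 := by
  have hc : q 0 ^ 2 + q 1 ^ 2 = 1 := by have := h1; simp [gam1] at this; linarith
  have hg2 : q 0 * Real.cos (q 2) + q 1 * Real.sin (q 2) = -(q 1 * q 3) := by
    have := h2; simp [gam2] at this; linarith
  have hpyth : Real.sin (q 2) ^ 2 + Real.cos (q 2) ^ 2 = 1 := Real.sin_sq_add_cos_sq _
  have hphi2 : varphiU q ^ 2 = 1 - (q 1 * q 3) ^ 2 := by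
    have key : varphiU q ^ 2 + (q 0 * Real.cos (q 2) + q 1 * Real.sin (q 2)) ^ 2
        = (q 0 ^ 2 + q 1 ^ 2) * (Real.sin (q 2) ^ 2 + Real.cos (q 2) ^ 2) := by
      simp only [varphiU]; ring
    rw [hg2, hc, hpyth] at key
    nlinarith [key]
  have hq1 : q 1 ^ 2 ≤ 1 := by nlinarith
  have hw3 : q 3 ^ 2 < 1 := by nlinarith [sq_nonneg (q 4)]
  have hbd : q 1 ^ 2 * q 3 ^ 2 ≤ q 3 ^ 2 := mul_le_of_le_one_left (sq_nonneg (q 3)) hq1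
  have hphi : varphiU q ≠ 0 := by
    intro h
    rw [h] at hphi2
    nlinarith [hphi2, hbd, hw3]
  refine ⟨hphi, ?_, ?_⟩
  · rw [gam1_fderiv_apply]
    simp [exFu, exGu]
    nlinarith [hg2]
  · rw [gam2_fderiv_apply]
    have hub : ubar q = fderiv ℝ gam2 q (exFu q) / varphiU q := rfl
    rw [gam2_fderiv_apply] at hub
    simp only [exFu, exGu, Pi.add_apply, Pi.smul_apply, smul_eq_mul,
      Matrix.cons_val_zero, Matrix.cons_val_one, Matrix.head_cons,
      Matrix.cons_val_two, Matrix.tail_cons, Matrix.cons_val_three,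
      Matrix.cons_val_four] at hub ⊢
    have key : ubar q * varphiU q =
        Real.cos (q 2) * Real.cos (q 2) - q 0 * Real.sin (q 2) * 0
        + (Real.sin (q 2) + q 3) * Real.sin (q 2) + q 1 * Real.cos (q 2) * 0
        + (Real.sin (q 2) + q 3) * q 3 + q 1 * q 4 := by
      rw [hub]; field_simp
    simp only [varphiU] at key
    linear_combination -key
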